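/- arXiv:1101.4293 — 3 statements merged into one kernel-verified Lean document; each statement's English description precedes it below -/
import Mathlib

section
/- The distance ratio function j_G(x,y) = log(1 + |x−y|/min{d(x,∂G), d(y,∂G)}) is a metric on any proper subdomain G ⊊ ℝⁿ. -/
/-!
Write `d` for the distance to `∂G`; it is positive on the open set `G` and 1-Lipschitz.
Symmetry and definiteness are immediate. For the triangle inequality through `z`, with
`a = |x - z|`, `b = |z - y|` and `d x ≤ d y`, exponentiate and split on `d z`:
if `d x ≤ d z`, then `min (d z) (d y) ≤ d x + a` and
`(1 + a / d x) (1 + b / (d x + a)) = 1 + (a + b) / d x`;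
if `d z ≤ d x`, then `(1 + a / d z) (1 + b / d z) ≥ 1 + (a + b) / d z ≥ 1 + (a + b) / d x`.
-/

open Metric

lemma one_add_div_mul_one_add_div_add {a b p : ℝ} (ha : 0 ≤ a) (hp : 0 < p) :
    (1 + a / p) * (1 + b / (p + a)) = 1 + (a + b) / p := by
  field_simp
  ring

lemma one_add_add_div_le_mul {a b r : ℝ} (ha : 0 ≤ a) (hb : 0 ≤ b) (hr : 0 < r) :
    1 + (a + b) / r ≤ (1 + a / r) * (1 + b / r) := by
  have : 0 ≤ a / r * (b / r) := by positivity
  calc 1 + (a + b) / r = 1 + a / r + b / r := by ring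
    _ ≤ (1 + a / r) * (1 + b / r) := by nlinarith

lemma one_add_div_min_le_mul {a b c p q r : ℝ} (ha : 0 ≤ a) (hb : 0 ≤ b) (hc : c ≤ a + b)
    (hp : 0 < p) (hq : 0 < q) (hr : 0 < r) (hrp : r ≤ p + a) (hrq : r ≤ q + b) :
    1 + c / min p q ≤ (1 + a / min p r) * (1 + b / min r q) := by
  wlog hpq : p ≤ q generalizing a b p q
  · have := this hb ha (by linarith) hq hp hrq hrp (by linarith)
    rwa [min_comm q p, min_comm q r, min_comm r p, mul_comm] at this
  rw [min_eq_left hpq]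
  calc 1 + c / p ≤ 1 + (a + b) / p := by gcongr
    _ ≤ (1 + a / min p r) * (1 + b / min r q) := by
      rcases le_total p r with hpr | hrp'
      · rw [min_eq_left hpr, ← one_add_div_mul_one_add_div_add ha hp]
        have : min r q ≤ p + a := (min_le_left r q).trans hrp
        gcongr
      · rw [min_eq_right hrp', min_eq_left (hrp'.trans hpq)]
        calc 1 + (a + b) / p ≤ 1 + (a + b) / r := by gcongr
          _ ≤ (1 + a / r) * (1 + b / r) := one_add_add_div_le_mul ha hb hr

section DistRatio

variable {α : Type*}

/-- For `d = (infDist · (frontier G))` this is the distance ratio metric `j_G`. -/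
noncomputable def distRatio [PseudoMetricSpace α] (d : α → ℝ) (x y : α) : ℝ :=
  Real.log (1 + dist x y / min (d x) (d y))

lemma distRatio_comm [PseudoMetricSpace α] (d : α → ℝ) (x y : α) :
    distRatio d x y = distRatio d y x := by
  rw [distRatio, distRatio, dist_comm, min_comm]

lemma one_le_one_add_dist_div_min [PseudoMetricSpace α] {d : α → ℝ} {x y : α}
    (hx : 0 ≤ d x) (hy : 0 ≤ d y) : 1 ≤ 1 + dist x y / min (d x) (d y) :=
  le_add_of_nonneg_right (div_nonneg dist_nonneg (le_min hx hy))

lemma distRatio_nonneg [PseudoMetricSpace α] {d : α → ℝ} {x y : α}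
    (hx : 0 ≤ d x) (hy : 0 ≤ d y) : 0 ≤ distRatio d x y :=
  Real.log_nonneg (one_le_one_add_dist_div_min hx hy)

lemma distRatio_eq_zero_iff [MetricSpace α] {d : α → ℝ} {x y : α}
    (hx : 0 < d x) (hy : 0 < d y) : distRatio d x y = 0 ↔ x = y := by
  have hmin : 0 < min (d x) (d y) := lt_min hx hy
  rw [distRatio, Real.log_eq_zero]
  constructor
  · rintro (h | h | h)
    · linarith [one_le_one_add_dist_div_min (y := y) hx.le hy.le]
    · simpa [hmin.ne'] using h
    · linarith [one_le_one_add_dist_div_min (y := y) hx.le hy.le]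
  · rintro rfl
    simp

lemma distRatio_triangle [PseudoMetricSpace α] {d : α → ℝ} (hd : LipschitzWith 1 d)
    {x y z : α} (hx : 0 < d x) (hy : 0 < d y) (hz : 0 < d z) :
    distRatio d x y ≤ distRatio d x z + distRatio d z y := by
  have hzx : d z ≤ d x + dist x z := by simpa [dist_comm] using hd.le_add_mul z x
  have hzy : d z ≤ d y + dist z y := by simpa using hd.le_add_mul z y
  have hkey := one_add_div_min_le_mul dist_nonneg dist_nonneg (dist_triangle x z y)
    hx hy hz hzx hzy
  rw [distRatio, distRatio, distRatio, ← Real.log_mul (by positivity) (by positivity)]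
  exact Real.log_le_log (by positivity) hkey

end DistRatio

lemma infDist_frontier_pos {E : Type*} [PseudoMetricSpace E] [PreconnectedSpace E] {G : Set E}
    (hopen : IsOpen G) (hproper : G ≠ Set.univ) {x : E} (hx : x ∈ G) :
    0 < infDist x (frontier G) := by
  have hne : (frontier G).Nonempty := nonempty_frontier_iff.mpr ⟨⟨x, hx⟩, hproper⟩
  refine (isClosed_frontier.notMem_iff_infDist_pos hne).mp ?_
  rw [hopen.frontier_eq]
  exact fun h => h.2 hx

theorem stmt13_general (n : ℕ) (G : Set (EuclideanSpace ℝ (Fin n)))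
    (hopen : IsOpen G) (hproper : G ≠ Set.univ)
    (j : EuclideanSpace ℝ (Fin n) → EuclideanSpace ℝ (Fin n) → ℝ)
    (hj : ∀ x y, j x y = Real.log (1 + dist x y /
      min (Metric.infDist x (frontier G)) (Metric.infDist y (frontier G)))) :
    (∀ x ∈ G, ∀ y ∈ G, j x y = j y x) ∧
    (∀ x ∈ G, ∀ y ∈ G, 0 ≤ j x y ∧ (j x y = 0 ↔ x = y)) ∧
    (∀ x ∈ G, ∀ y ∈ G, ∀ z ∈ G, j x y ≤ j x z + j z y) := by
  obtain rfl : j = distRatio (infDist · (frontier G)) := funext₂ hj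
  have hpos := fun x (hx : x ∈ G) => infDist_frontier_pos hopen hproper hx
  exact ⟨fun x _ y _ => distRatio_comm _ x y,
    fun x hx y hy => ⟨distRatio_nonneg (hpos x hx).le (hpos y hy).le,
      distRatio_eq_zero_iff (hpos x hx) (hpos y hy)⟩,
    fun x hx y hy z hz =>
      distRatio_triangle (lipschitz_infDist_pt _) (hpos x hx) (hpos y hy) (hpos z hz)⟩

/-- The distance ratio function `j_G(x,y) = log(1 + |x−y|/min{d(x,∂G), d(y,∂G)})` is a
metric on any proper subdomain `G ⊊ ℝⁿ`. -/
theorem stmt13 (n : ℕ) (G : Set (EuclideanSpace ℝ (Fin n)))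
    (hopen : IsOpen G) (hconn : IsConnected G) (hproper : G ≠ Set.univ)
    (j : EuclideanSpace ℝ (Fin n) → EuclideanSpace ℝ (Fin n) → ℝ)
    (hj : ∀ x y, j x y = Real.log (1 + dist x y /
      min (Metric.infDist x (frontier G)) (Metric.infDist y (frontier G)))) :
    (∀ x ∈ G, ∀ y ∈ G, j x y = j y x) ∧
    (∀ x ∈ G, ∀ y ∈ G, 0 ≤ j x y ∧ (j x y = 0 ↔ x = y)) ∧
    (∀ x ∈ G, ∀ y ∈ G, ∀ z ∈ G, j x y ≤ j x z + j z y) :=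
  stmt13_general n G hopen hproper j hj
end

section
/- For any domain G ⊊ ℝⁿ and x, y ∈ G, the quasihyperbolic distance satisfies k_G(x,y) ≥ log(1 + L/min{δ(x),δ(y)}) ≥ j_G(x,y), where L is the infimum of Euclidean lengths of curves joining x to y in G and δ(z) = dist(z, ∂G). -/
open Set

/-- Smooth paths in `G` joining `x` to `y`. -/
def PathsIn {n : ℕ} (G : Set (EuclideanSpace ℝ (Fin n)))
    (x y : EuclideanSpace ℝ (Fin n)) :=
  {γ : ℝ → EuclideanSpace ℝ (Fin n) //
    γ 0 = x ∧ γ 1 = y ∧ ContDiffOn ℝ 1 γ (Icc 0 1) ∧ ∀ t ∈ Icc (0 : ℝ) 1, γ t ∈ G}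

/-- The quasihyperbolic distance in `G`: the infimum of `∫ |γ'(t)|/δ(γ(t)) dt`, where
`δ(z) = dist(z, ∂G)`, over paths in `G` joining `x` to `y`. -/
noncomputable def quasiHypDist {n : ℕ} (G : Set (EuclideanSpace ℝ (Fin n)))
    (x y : EuclideanSpace ℝ (Fin n)) : ℝ :=
  ⨅ γ : PathsIn G x y,
    ∫ t in (0 : ℝ)..1, ‖deriv γ.1 t‖ / Metric.infDist (γ.1 t) (frontier G)

/-- The infimum of Euclidean lengths of curves joining `x` to `y` in `G`. -/
noncomputable def infLength {n : ℕ} (G : Set (EuclideanSpace ℝ (Fin n)))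
    (x y : EuclideanSpace ℝ (Fin n)) : ℝ :=
  ⨅ γ : PathsIn G x y, ∫ t in (0 : ℝ)..1, ‖deriv γ.1 t‖

/-!
The distance to the boundary `δ` is `1`-Lipschitz, so along a path from `x` parametrised by arc
length `s` we have `δ(γ(s)) ≤ δ(x) + s`. Hence the quasihyperbolic length of a path of Euclidean
length `ℓ` is at least `∫₀^ℓ ds / (δ(x) + s) = log (1 + ℓ / δ(x))`, and symmetrically with `y`
in place of `x`. Since `ℓ ≥ L ≥ |x - y|`, taking infima gives both inequalities; the infima are
over a nonempty family (otherwise they would be `0`) because in an open connected set any two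
points are joined by a chain of segments, which can be glued into a `C¹` path.
-/

open Set MeasureTheory intervalIntegral Real

section LogIntegral

variable {a b c : ℝ} {v D : ℝ → ℝ}

theorem log_one_add_integral_div_le_integral_div_left (hab : a ≤ b) (hc : 0 < c)
    (hv : ContinuousOn v (Icc a b)) (hv0 : ∀ t ∈ Icc a b, 0 ≤ v t)
    (hD : ContinuousOn D (Icc a b)) (hD0 : ∀ t ∈ Icc a b, 0 < D t)
    (hDle : ∀ t ∈ Icc a b, D t ≤ c + ∫ s in a..t, v s) :
    log (1 + (∫ t in a..b, v t) / c) ≤ ∫ t in a..b, v t / D t := by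
  set u : ℝ → ℝ := fun t => c + ∫ s in a..t, v s
  have hu : ContinuousOn u (Icc a b) := by
    have hvi : IntegrableOn v (uIcc a b) := by
      rw [uIcc_of_le hab]; exact hv.integrableOn_Icc
    have := continuousOn_primitive_interval hvi
    rw [uIcc_of_le hab] at this
    exact continuousOn_const.add this
  have hu0 : ∀ t ∈ Icc a b, 0 < u t := fun t ht => (hD0 t ht).trans_le (hDle t ht)
  have hu' : ∀ t ∈ Ioo a b, HasDerivAt u (v t) t := fun t ht =>
    ((integral_hasDerivAt_right
      ((hv.mono (Icc_subset_Icc_right ht.2.le)).intervalIntegrable_of_Icc ht.1.le)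
      ((hv.mono Ioo_subset_Icc_self).stronglyMeasurableAtFilter isOpen_Ioo t ht)
      (hv.continuousAt (Icc_mem_nhds ht.1 ht.2))).const_add c)
  have hlog : ∫ t in a..b, v t / u t = log (u b) - log (u a) :=
    integral_eq_sub_of_hasDeriv_right_of_le hab (hu.log fun t ht => (hu0 t ht).ne')
      (fun t ht => ((hu' t ht).log (hu0 t (Ioo_subset_Icc_self ht)).ne').hasDerivWithinAt)
      ((hv.div hu fun t ht => (hu0 t ht).ne').intervalIntegrable_of_Icc hab)
  calc log (1 + (∫ t in a..b, v t) / c) = log (u b) - log (u a) := by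
        rw [← log_div (hu0 b (right_mem_Icc.2 hab)).ne' (hu0 a (left_mem_Icc.2 hab)).ne']
        simp only [u, integral_same, add_zero, add_div, div_self hc.ne']
    _ = ∫ t in a..b, v t / u t := hlog.symm
    _ ≤ ∫ t in a..b, v t / D t :=
        integral_mono_on hab ((hv.div hu fun t ht => (hu0 t ht).ne').intervalIntegrable_of_Icc hab)
          ((hv.div hD fun t ht => (hD0 t ht).ne').intervalIntegrable_of_Icc hab)
          fun t ht => div_le_div_of_nonneg_left (hv0 t ht) (hD0 t ht) (hDle t ht)

theorem log_one_add_integral_div_le_integral_div_right (hab : a ≤ b) (hc : 0 < c)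
    (hv : ContinuousOn v (Icc a b)) (hv0 : ∀ t ∈ Icc a b, 0 ≤ v t)
    (hD : ContinuousOn D (Icc a b)) (hD0 : ∀ t ∈ Icc a b, 0 < D t)
    (hDle : ∀ t ∈ Icc a b, D t ≤ c + ∫ s in t..b, v s) :
    log (1 + (∫ t in a..b, v t) / c) ≤ ∫ t in a..b, v t / D t := by
  have hreflect : MapsTo (fun t => a + b - t) (Icc a b) (Icc a b) := fun t ht =>
    ⟨by linarith [ht.2], by linarith [ht.1]⟩
  have key := log_one_add_integral_div_le_integral_div_left (v := fun t => v (a + b - t))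
    (D := fun t => D (a + b - t)) hab hc
    (hv.comp (continuousOn_const.sub continuousOn_id) hreflect) (fun t ht => hv0 _ (hreflect ht))
    (hD.comp (continuousOn_const.sub continuousOn_id) hreflect) (fun t ht => hD0 _ (hreflect ht))
    fun t ht => by simpa [integral_comp_sub_left] using hDle _ (hreflect ht)
  simpa [integral_comp_sub_left fun t => v t / D t, integral_comp_sub_left v] using key

end LogIntegral

section C1Path

variable {E : Type*} [NormedAddCommGroup E] [NormedSpace ℝ E] {p : ℝ → E} {a b : ℝ}

theorem integral_deriv_eq_integral_derivWithin_Icc {F : Type*} [NormedAddCommGroup F]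
    [NormedSpace ℝ F] (hab : a ≤ b) (f : ℝ → E → F) :
    ∫ t in a..b, f t (deriv p t) = ∫ t in a..b, f t (derivWithin p (Icc a b) t) :=
  integral_congr_Ioo_of_le hab fun t ht => by
    rw [derivWithin_of_mem_nhds (Icc_mem_nhds ht.1 ht.2)]

namespace ContDiffOn

theorem hasDerivAt_derivWithin_Icc (hp : ContDiffOn ℝ 1 p (Icc a b)) {t : ℝ}
    (ht : t ∈ Ioo a b) : HasDerivAt p (derivWithin p (Icc a b) t) t := by
  have hmem : Icc a b ∈ nhds t := Icc_mem_nhds ht.1 ht.2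
  rw [derivWithin_of_mem_nhds hmem]
  exact ((hp.differentiableOn one_ne_zero t (Ioo_subset_Icc_self ht)).differentiableAt
    hmem).hasDerivAt

variable [CompleteSpace E]

theorem norm_sub_le_integral_norm_derivWithin (hp : ContDiffOn ℝ 1 p (Icc a b)) (hab : a < b)
    {s t : ℝ} (hs : a ≤ s) (hst : s ≤ t) (ht : t ≤ b) :
    ‖p t - p s‖ ≤ ∫ u in s..t, ‖derivWithin p (Icc a b) u‖ := by
  have hsub : Icc s t ⊆ Icc a b := Icc_subset_Icc hs ht
  have hFTC : ∫ u in s..t, derivWithin p (Icc a b) u = p t - p s :=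
    integral_eq_sub_of_hasDeriv_right_of_le hst (hp.continuousOn.mono hsub)
      (fun u hu => (hp.hasDerivAt_derivWithin_Icc
        ⟨hs.trans_lt hu.1, hu.2.trans_le ht⟩).hasDerivWithinAt)
      (((hp.continuousOn_derivWithin (uniqueDiffOn_Icc hab) le_rfl).mono
        hsub).intervalIntegrable_of_Icc hst)
  exact hFTC ▸ norm_integral_le_integral_norm hst

theorem log_one_add_integral_norm_deriv_div_le (hp : ContDiffOn ℝ 1 p (Icc a b)) (hab : a < b)
    {δ : E → ℝ} (hδ : LipschitzWith 1 δ) (hδ0 : ∀ t ∈ Icc a b, 0 < δ (p t)) :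
    Real.log (1 + (∫ t in a..b, ‖deriv p t‖) / min (δ (p a)) (δ (p b)))
      ≤ ∫ t in a..b, ‖deriv p t‖ / δ (p t) := by
  rw [integral_deriv_eq_integral_derivWithin_Icc hab.le fun _ v => ‖v‖,
    integral_deriv_eq_integral_derivWithin_Icc hab.le fun t v => ‖v‖ / δ (p t)]
  have hv := (hp.continuousOn_derivWithin (uniqueDiffOn_Icc hab) le_rfl).norm
  have hD : ContinuousOn (fun t => δ (p t)) (Icc a b) :=
    hδ.continuous.comp_continuousOn hp.continuousOn
  have hδle : ∀ s t, δ (p t) ≤ δ (p s) + ‖p t - p s‖ := fun s t => by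
    simpa [dist_eq_norm] using hδ.le_add_mul (p t) (p s)
  rcases min_choice (δ (p a)) (δ (p b)) with hmin | hmin <;> rw [hmin]
  · exact log_one_add_integral_div_le_integral_div_left hab.le (hδ0 a (left_mem_Icc.2 hab.le))
      hv (fun _ _ => norm_nonneg _) hD hδ0 fun t ht =>
      (hδle a t).trans (add_le_add le_rfl
        (hp.norm_sub_le_integral_norm_derivWithin hab le_rfl ht.1 ht.2))
  · refine log_one_add_integral_div_le_integral_div_right hab.le (hδ0 b (right_mem_Icc.2 hab.le))
      hv (fun _ _ => norm_nonneg _) hD hδ0 fun t ht =>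
      (hδle b t).trans (add_le_add le_rfl ?_)
    rw [← norm_neg, neg_sub]
    exact hp.norm_sub_le_integral_norm_derivWithin hab ht.1 ht.2 le_rfl

theorem norm_sub_le_integral_norm_deriv (hp : ContDiffOn ℝ 1 p (Icc a b)) (hab : a < b) :
    ‖p b - p a‖ ≤ ∫ t in a..b, ‖deriv p t‖ := by
  rw [integral_deriv_eq_integral_derivWithin_Icc hab.le fun _ v => ‖v‖]
  exact hp.norm_sub_le_integral_norm_derivWithin hab le_rfl hab.le le_rfl

end ContDiffOn

end C1Path

theorem IsOpen.infDist_frontier_pos {α : Type*} [PseudoMetricSpace α] {G : Set α} (hG : IsOpen G)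
    (hfr : (frontier G).Nonempty) {z : α} (hz : z ∈ G) : 0 < Metric.infDist z (frontier G) :=
  (isClosed_frontier.notMem_iff_infDist_pos hfr).1 fun hz' => (hG.frontier_eq ▸ hz').2 hz

namespace PathsIn

variable {n : ℕ} {G : Set (EuclideanSpace ℝ (Fin n))} {x y z : EuclideanSpace ℝ (Fin n)}

noncomputable def ofSegment (h : segment ℝ x y ⊆ G) : PathsIn G x y :=
  ⟨fun t => x + t • (y - x), by simp, by simp, by fun_prop,
    fun t ht => h (segment_eq_image' ℝ x y ▸ mem_image_of_mem _ ht)⟩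

/-- The two halves are reparametrised by `smoothTransition`, so the concatenation is constant
near the junction `t = 1/2` and hence still `C¹`. -/
noncomputable def trans (γ : PathsIn G x y) (η : PathsIn G y z) : PathsIn G x z := by
  obtain ⟨p, hp0, hp1, hp, hpG⟩ := γ
  obtain ⟨q, hq0, hq1, hq, hqG⟩ := η
  have hσ (s : ℝ) : smoothTransition s ∈ Icc (0 : ℝ) 1 :=
    ⟨smoothTransition.nonneg s, smoothTransition.le_one s⟩
  set f : ℝ → EuclideanSpace ℝ (Fin n) := fun t => p (smoothTransition (4 * t))
  set g : ℝ → EuclideanSpace ℝ (Fin n) := fun t => q (smoothTransition (4 * t - 3))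
  have hf : ContDiff ℝ 1 f :=
    hp.comp_contDiff (smoothTransition.contDiff.comp (by fun_prop)) fun _ => hσ _
  have hg : ContDiff ℝ 1 g :=
    hq.comp_contDiff (smoothTransition.contDiff.comp (by fun_prop)) fun _ => hσ _
  have hfg : f =ᶠ[nhds (1 / 2)] g := by
    filter_upwards [Ioo_mem_nhds (by norm_num : (1 / 4 : ℝ) < 1 / 2)
      (by norm_num : (1 / 2 : ℝ) < 3 / 4)] with t ht
    simp only [f, g, smoothTransition.one_of_one_le (by linarith [ht.1] : 1 ≤ 4 * t),
      smoothTransition.zero_of_nonpos (by linarith [ht.2] : 4 * t - 3 ≤ 0), hp1, hq0]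
  refine ⟨(Iic (1 / 2)).piecewise f g, ?_, ?_,
    (ContMDiff.piecewise_Iic hf.contMDiff hg.contMDiff hfg).contDiff.contDiffOn, ?_⟩
  · simp [f, hp0]
  · rw [piecewise_eq_of_notMem _ _ _ (by norm_num)]
    norm_num [g, hq1]
  · intro t _
    by_cases ht : t ∈ Iic (1 / 2)
    · rw [piecewise_eq_of_mem _ _ _ ht]; exact hpG _ (hσ _)
    · rw [piecewise_eq_of_notMem _ _ _ ht]; exact hqG _ (hσ _)

theorem _root_.IsOpen.nonempty_pathsIn (hG : IsOpen G) (hconn : IsPreconnected G) (hx : x ∈ G)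
    (hy : y ∈ G) : Nonempty (PathsIn G x y) := by
  refine hconn.induction₂' (fun a b => Nonempty (PathsIn G a b)) (fun a ha => ?_)
    (fun _ _ _ _ _ _ ⟨γ⟩ ⟨η⟩ => ⟨γ.trans η⟩) hx hy
  obtain ⟨r, hr, hball⟩ := Metric.isOpen_iff.1 hG a ha
  filter_upwards [mem_nhdsWithin_of_mem_nhds (Metric.ball_mem_nhds a hr)] with b hb
  have hconv := convex_ball a r
  exact ⟨⟨ofSegment ((hconv.segment_subset (Metric.mem_ball_self hr) hb).trans hball)⟩,
    ⟨ofSegment ((hconv.segment_subset hb (Metric.mem_ball_self hr)).trans hball)⟩⟩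

theorem dist_le_length (γ : PathsIn G x y) : dist x y ≤ ∫ t in (0 : ℝ)..1, ‖deriv γ.1 t‖ := by
  obtain ⟨p, rfl, rfl, hp, -⟩ := γ
  rw [dist_comm, dist_eq_norm]
  exact hp.norm_sub_le_integral_norm_deriv zero_lt_one

theorem log_one_add_length_div_le (hG : IsOpen G) (hfr : (frontier G).Nonempty)
    (γ : PathsIn G x y) :
    log (1 + (∫ t in (0 : ℝ)..1, ‖deriv γ.1 t‖) /
        min (Metric.infDist x (frontier G)) (Metric.infDist y (frontier G)))
      ≤ ∫ t in (0 : ℝ)..1, ‖deriv γ.1 t‖ / Metric.infDist (γ.1 t) (frontier G) := by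
  obtain ⟨p, rfl, rfl, hp, hpG⟩ := γ
  exact hp.log_one_add_integral_norm_deriv_div_le zero_lt_one (Metric.lipschitz_infDist_pt _)
    fun t ht => hG.infDist_frontier_pos hfr (hpG t ht)

end PathsIn

/-- For any domain `G ⊊ ℝⁿ` and `x, y ∈ G`,
`k_G(x,y) ≥ log(1 + L/min{δ(x),δ(y)}) ≥ j_G(x,y)` where `L` is the infimal Euclidean
length of curves joining `x` and `y` in `G` and `δ(z) = dist(z, ∂G)`. -/
theorem stmt14 (n : ℕ) (G : Set (EuclideanSpace ℝ (Fin n)))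
    (hopen : IsOpen G) (hconn : IsConnected G) (hproper : G ≠ Set.univ)
    (x y : EuclideanSpace ℝ (Fin n)) (hx : x ∈ G) (hy : y ∈ G) :
    quasiHypDist G x y ≥
      Real.log (1 + infLength G x y /
        min (Metric.infDist x (frontier G)) (Metric.infDist y (frontier G))) ∧
    Real.log (1 + infLength G x y /
        min (Metric.infDist x (frontier G)) (Metric.infDist y (frontier G))) ≥
      Real.log (1 + dist x y /
        min (Metric.infDist x (frontier G)) (Metric.infDist y (frontier G))) := by
  have : Nonempty (PathsIn G x y) := hopen.nonempty_pathsIn hconn.isPreconnected hx hy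
  have hfr : (frontier G).Nonempty := nonempty_frontier_iff.2 ⟨⟨x, hx⟩, hproper⟩
  set m := min (Metric.infDist x (frontier G)) (Metric.infDist y (frontier G))
  have hm : 0 < m :=
    lt_min (hopen.infDist_frontier_pos hfr hx) (hopen.infDist_frontier_pos hfr hy)
  have hlog_mono {r s : ℝ} (hr : 0 ≤ r) (hrs : r ≤ s) : log (1 + r / m) ≤ log (1 + s / m) :=
    log_le_log (by positivity) (by gcongr)
  have hdist : dist x y ≤ infLength G x y := le_ciInf PathsIn.dist_le_length
  refine ⟨le_ciInf fun γ => ?_, hlog_mono dist_nonneg hdist⟩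
  have hbdd : BddBelow (range fun γ : PathsIn G x y => ∫ t in (0 : ℝ)..1, ‖deriv γ.1 t‖) :=
    ⟨0, by rintro _ ⟨η, rfl⟩; exact integral_nonneg zero_le_one fun _ _ => norm_nonneg _⟩
  exact (hlog_mono (dist_nonneg.trans hdist) (ciInf_le hbdd γ)).trans
    (γ.log_one_add_length_div_le hopen hfr)
end

section
/- In the unit disk, the diameter of the j-sphere of radius M centered at 0 equals log(2e^M − 1), which is strictly less than 2M for every M > 0. -/
/-! The points `x` and `-x` lie at Euclidean distance `2‖x‖` and have the same distance
`1 - ‖x‖ = e^{-M}` to the boundary, so `j(x, -x) = log(1 + 2(1 - e^{-M}) e^M) = log(2e^M - 1)`.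
The strict inequality `2e^M - 1 < e^{2M}` is `0 < (e^M - 1)^2`. -/

/-- The distance ratio metric of the unit ball. -/
noncomputable def jBall {n : ℕ} (x y : EuclideanSpace ℝ (Fin n)) : ℝ :=
  Real.log (1 + dist x y / min (1 - ‖x‖) (1 - ‖y‖))

open Real

theorem dist_neg_self_eq_two_mul_norm {E : Type*} [NormedAddCommGroup E] [NormedSpace ℝ E]
    (x : E) : dist x (-x) = 2 * ‖x‖ := by
  rw [dist_eq_norm, sub_neg_eq_add, ← two_smul ℝ x, norm_smul, Real.norm_two]

theorem jBall_neg_self {n : ℕ} (x : EuclideanSpace ℝ (Fin n)) :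
    jBall x (-x) = log (1 + 2 * ‖x‖ / (1 - ‖x‖)) := by
  rw [jBall, dist_neg_self_eq_two_mul_norm, norm_neg, min_self]

theorem one_add_two_mul_div_eq_two_mul_exp_sub_one (M : ℝ) :
    1 + 2 * (1 - exp (-M)) / (1 - (1 - exp (-M))) = 2 * exp M - 1 := by
  rw [sub_sub_cancel, exp_neg]
  field_simp
  ring

theorem log_two_mul_exp_sub_one_lt {M : ℝ} (hM : 0 < M) : log (2 * exp M - 1) < 2 * M := by
  have hpos : 0 < 2 * exp M - 1 := by linarith [add_one_lt_exp hM.ne']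
  rw [log_lt_iff_lt_exp hpos, two_mul M, exp_add]
  nlinarith [sq_pos_of_pos (sub_pos.2 (one_lt_exp_iff.2 hM))]

/-- In the unit ball, the diameter of the `j`-sphere of radius `M` centered at `0` equals
`log(2e^M − 1)`: for `x` on the boundary of `B_j(0,M)` (i.e. `|x| = 1 − e^{−M}`) one has
`j(x,−x) = log(2e^M − 1)`, and this is strictly less than `2M` for every `M > 0`. -/
theorem stmt19 (n : ℕ) (M : ℝ) (hM : 0 < M)
    (x : EuclideanSpace ℝ (Fin n)) (hx : ‖x‖ = 1 - Real.exp (-M)) :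
    jBall x (-x) = Real.log (2 * Real.exp M - 1) ∧
    Real.log (2 * Real.exp M - 1) < 2 * M := by
  refine ⟨?_, log_two_mul_exp_sub_one_lt hM⟩
  rw [jBall_neg_self, hx, one_add_two_mul_div_eq_two_mul_exp_sub_one]
end
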